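/- Let D be an ordinary Dyck sequence and let φ₁(D) = (E,F,G). Then area(E ⧺ F ⧺ G) = area(D) and dinv(E ⧺ F ⧺ G) − len(E) = dinv(D), where ⧺ denotes concatenation. -/

import Mathlib

/-- A finite integer sequence is an *affine Dyck sequence* if each entry is at
most the previous entry plus 1. -/
def AffineDyck (x : List ℤ) : Prop := List.Chain' (fun a b => b ≤ a + 1) x

/-- A finite integer sequence is a *reverse Dyck sequence* if each entry is at
least the previous entry minus 1. -/
def ReverseDyck (x : List ℤ) : Prop := List.Chain' (fun a b => a - 1 ≤ b) x

/-- An *ordinary Dyck sequence* is a nonempty affine Dyck sequence starting at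
`0` with all entries nonnegative. -/
def OrdDyck (x : List ℤ) : Prop :=
  x ≠ [] ∧ AffineDyck x ∧ x.getD 0 0 = 0 ∧ ∀ a ∈ x, 0 ≤ a

/-- An index `j` of `C` is *eligible* if there is exactly one index `i < j`
with `C i = C j − 1`, and either `j` is the final index or the next entry is
at most `C j`. -/
def Eligible (C : List ℤ) (j : ℕ) : Prop :=
  j < C.length ∧
  ((Finset.range j).filter (fun i => C.getD i 0 = C.getD j 0 - 1)).card = 1 ∧
  (j + 1 = C.length ∨ C.getD (j + 1) 0 ≤ C.getD j 0)

instance (C : List ℤ) (j : ℕ) : Decidable (Eligible C j) := by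
  unfold Eligible; infer_instance

/-- A *Dyck `m`-skeleton*: an ordinary Dyck sequence with maximum `m`, whose
last entry equals `m`, having no eligible index other than possibly the final
one. -/
def DyckSkeleton (m : ℤ) (F : List ℤ) : Prop :=
  OrdDyck F ∧ (∀ a ∈ F, a ≤ m) ∧ F.getLast? = some m ∧
  ∀ j, Eligible F j → j + 1 = F.length

/-- The leftmost eligible index of `C` that is not the final index. -/
def eligNF? (C : List ℤ) : Option ℕ :=
  (List.range C.length).find? (fun j => decide (Eligible C j ∧ j + 1 ≠ C.length))

/-- The extraction loop: while the current sequence has a nonfinal eligible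
index, remove the entry at the leftmost such index and append the removed
value to the output `E`. -/
def extractAux : ℕ → List ℤ → List ℤ → List ℤ × List ℤ
  | 0, E, C => (E, C)
  | fuel + 1, E, C =>
    match eligNF? C with
    | none => (E, C)
    | some j => extractAux fuel (E ++ [C.getD j 0]) (C.eraseIdx j)

/-- The map `φ₁`: split `D` after its last maximum into `C` and `G`, fully
extract nonfinal extractable entries of `C` into `E`, and return the
resulting triple `(E, F, G)`. -/
def phi1 (D : List ℤ) : List ℤ × List ℤ × List ℤ :=
  let m := D.foldr max 0
  let k := D.length - 1 - D.reverse.findIdx (fun a => decide (a = m))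
  let EF := extractAux (k + 1) [] (D.take (k + 1))
  (EF.1, EF.2, D.drop (k + 1))

/-- `di x` is the number of pairs `i < j` with `x i = x j + 1`. -/
def di (x : List ℤ) : ℕ :=
  ((Finset.range x.length ×ˢ Finset.range x.length).filter
    (fun p => p.1 < p.2 ∧ x.getD p.1 0 = x.getD p.2 0 + 1)).card

/-- `nv x` is the number of pairs `i < j` with `x i = x j`. -/
def nv (x : List ℤ) : ℕ :=
  ((Finset.range x.length ×ˢ Finset.range x.length).filter
    (fun p => p.1 < p.2 ∧ x.getD p.1 0 = x.getD p.2 0)).card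

/-- `dinv x = di x + nv x`. -/
def dinv (x : List ℤ) : ℕ := di x + nv x

/-- `area x` is the sum of the entries of `x`. -/
def area (x : List ℤ) : ℤ := x.sum

/-!
Extracting the entry `v = C j` moves it from position `j` of `E ⧺ C ⧺ G` to the end of `E`. This
permutes the sequence, so `area` and `nv` (which counts pairs for a symmetric relation) do not
change. For `di` only the pairs formed by `v` and the prefix `P = C[0..j)` change: `v` now precedes
`P` instead of following it, so `di` changes by `#{b ∈ P | b = v - 1} - #{b ∈ P | b = v + 1}`. The
first count is `1` by eligibility. The second is `0` because every entry of `P` is below `v`: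
otherwise the first occurrence of `v` in `P` starts a run of unit up-steps which ends at an eligible
index before `j`, contradicting the choice of `j` as the leftmost one. So every extraction raises
`dinv` by exactly one.
-/

open Finset

namespace List

variable {α : Type*} (r : α → α → Prop) [DecidableRel r]

def pairCount : List α → ℕ
  | [] => 0
  | a :: l => l.countP (r a) + pairCount l

@[simp] theorem pairCount_nil : pairCount r [] = 0 := rfl

@[simp] theorem pairCount_cons (a : α) (l : List α) :
    pairCount r (a :: l) = l.countP (r a) + pairCount r l := rfl

theorem pairCount_append_singleton (l : List α) (a : α) :
    pairCount r (l ++ [a]) = pairCount r l + l.countP (r · a) := by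
  induction l with
  | nil => simp
  | cons b l ih =>
    simp only [cons_append, pairCount_cons, ih, countP_append, countP_cons, countP_nil]
    omega

theorem pairCount_append_cons_append (A P B : List α) (v : α) :
    pairCount r (A ++ v :: (P ++ B)) + P.countP (r · v) =
      pairCount r (A ++ (P ++ v :: B)) + P.countP (r v) := by
  induction A with
  | nil =>
    induction P with
    | nil => simp
    | cons p P ih =>
      simp only [nil_append, cons_append, pairCount_cons, countP_cons, countP_append] at ih ⊢
      omega
  | cons a A ih =>
    simp only [cons_append, pairCount_cons]
    rw [(perm_middle.append_left A).countP_eq, ← (perm_middle.append_left A).countP_eq]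
    omega

variable {r} in
theorem Perm.pairCount_eq [Std.Symm r] {l₁ l₂ : List α} (h : l₁ ~ l₂) :
    pairCount r l₁ = pairCount r l₂ := by
  induction h with
  | nil => rfl
  | cons a h ih => simp [ih, h.countP_eq]
  | swap a b l =>
    simp only [pairCount_cons, countP_cons, decide_eq_true_eq, Std.Symm.iff (r := r) b a]
    omega
  | trans _ _ ih₁ ih₂ => exact ih₁.trans ih₂

theorem pairCount_eq_sum_countP_take (x : List α) (d : α) :
    x.pairCount r = ∑ j ∈ Finset.range x.length, (x.take j).countP (r · (x.getD j d)) := by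
  induction x using reverseRecOn with
  | nil => rfl
  | append_singleton l a ih =>
    rw [pairCount_append_singleton, ih, length_append, length_singleton, Finset.sum_range_succ,
      take_left' rfl, getD_append_right _ _ _ _ le_rfl, Nat.sub_self, getD_cons_zero]
    congr 1
    refine Finset.sum_congr rfl fun j hj => ?_
    rw [take_append_of_le_length (Finset.mem_range.mp hj).le,
      getD_append _ _ _ _ (Finset.mem_range.mp hj)]

end List

section

variable {α : Type*}

theorem card_filter_range_getD_eq_countP (p : α → Prop) [DecidablePred p] (x : List α) (d : α)
    {j : ℕ} (hj : j ≤ x.length) :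
    #{i ∈ range j | p (x.getD i d)} = (x.take j).countP p := by
  induction j with
  | zero => simp
  | succ j ih =>
    rw [range_add_one, filter_insert, List.take_add_one, List.getElem?_eq_getElem (by omega),
      List.countP_append, ← ih (by omega), ← List.getD_eq_getElem x d (by omega),
      Option.toList_some, List.countP_singleton]
    by_cases h : p (x.getD j d)
    · simp only [h, decide_true, if_true]
      exact card_insert_of_notMem (by simp)
    · simp only [h, decide_false, if_false, Bool.false_eq_true, add_zero]

theorem card_filter_getD_lt_getD_eq_pairCount (r : α → α → Prop) [DecidableRel r] (x : List α)
    (d : α) :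
    #{p ∈ range x.length ×ˢ range x.length | p.1 < p.2 ∧ r (x.getD p.1 d) (x.getD p.2 d)} =
      x.pairCount r := by
  rw [x.pairCount_eq_sum_countP_take r d, card_filter, sum_product_right]
  refine sum_congr rfl fun j hj => ?_
  rw [mem_range] at hj
  rw [← card_filter_range_getD_eq_countP _ x d hj.le, ← card_filter]
  congr 1
  ext i
  simp only [mem_filter, mem_range]
  exact ⟨fun ⟨_, h⟩ => h, fun h => ⟨by omega, h⟩⟩

end

theorem AffineDyck.getD_succ_le {C : List ℤ} (hC : AffineDyck C) {i : ℕ}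
    (hi : i + 1 < C.length) :
    C.getD (i + 1) 0 ≤ C.getD i 0 + 1 := by
  rw [List.getD_eq_getElem _ _ hi, List.getD_eq_getElem _ _ (by omega)]
  exact List.isChain_iff_getElem.mp hC i hi

theorem AffineDyck.exists_getD_eq {C : List ℤ} (hC : AffineDyck C) {s : ℕ} (hs : s < C.length)
    {u : ℤ} (h0 : C.getD 0 0 ≤ u) (hu : u ≤ C.getD s 0) : ∃ r ≤ s, C.getD r 0 = u := by
  induction s with
  | zero => exact ⟨0, le_rfl, by omega⟩
  | succ s ih =>
    by_cases h : u ≤ C.getD s 0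
    · obtain ⟨r, hr, hru⟩ := ih (by omega) h
      exact ⟨r, by omega, hru⟩
    · exact ⟨s + 1, le_rfl, by have := hC.getD_succ_le hs; omega⟩

theorem AffineDyck.eraseIdx {C : List ℤ} (hC : AffineDyck C) {j : ℕ}
    (hj : j + 1 = C.length ∨ C.getD (j + 1) 0 ≤ C.getD j 0) : AffineDyck (C.eraseIdx j) := by
  rw [List.eraseIdx_eq_take_drop_succ]
  refine List.IsChain.append (List.IsChain.take hC j) (List.IsChain.drop hC (j + 1)) ?_
  intro x hx y hy
  rw [List.head?_drop, Option.mem_def, List.getElem?_eq_some_iff] at hy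
  obtain ⟨hj1, rfl⟩ := hy
  rw [List.getLast?_take] at hx
  split_ifs at hx with hj0
  · simp at hx
  rw [List.getElem?_eq_getElem (by omega), Option.some_or, Option.mem_some_iff] at hx
  subst hx
  have hle := hC.getD_succ_le (i := j - 1) (by omega)
  rw [Nat.sub_add_cancel (by omega)] at hle
  rw [List.getD_eq_getElem _ _ hj1, List.getD_eq_getElem _ _ (by omega)] at hj
  rw [List.getD_eq_getElem _ _ (by omega), List.getD_eq_getElem _ _ (by omega)] at hle
  omega

theorem eligNF?_eq_some_iff {C : List ℤ} {j : ℕ} :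
    eligNF? C = some j ↔
      (Eligible C j ∧ j + 1 ≠ C.length) ∧ ∀ t < j, ¬(Eligible C t ∧ t + 1 ≠ C.length) := by
  simp only [eligNF?, List.find?_range_eq_some, decide_eq_true_eq, List.mem_range,
    Bool.not_eq_eq_eq_not, Bool.not_true, decide_eq_false_iff_not]
  exact ⟨fun ⟨h, _, hmin⟩ => ⟨h, hmin⟩, fun ⟨h, hmin⟩ => ⟨h, h.1.1, hmin⟩⟩

namespace OrdDyck

variable {C : List ℤ}

theorem getD_nonneg (hC : OrdDyck C) (i : ℕ) : 0 ≤ C.getD i 0 := by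
  rcases lt_or_ge i C.length with h | h
  · rw [List.getD_eq_getElem _ _ h]
    exact hC.2.2.2 _ (List.getElem_mem h)
  · rw [List.getD_eq_default _ _ h]

theorem exists_getD_eq (hC : OrdDyck C) {s : ℕ} (hs : s < C.length) {u : ℤ} (hu0 : 0 ≤ u)
    (hu : u ≤ C.getD s 0) : ∃ r ≤ s, C.getD r 0 = u :=
  hC.2.1.exists_getD_eq hs (by rw [hC.2.2.1]; exact hu0) hu

theorem take (hC : OrdDyck C) {n : ℕ} (hn : 0 < n) : OrdDyck (C.take n) := by
  obtain ⟨hne, hA, h0, hnonneg⟩ := hC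
  have hlen : 0 < C.length := List.length_pos_iff.mpr hne
  refine ⟨by simp [hne, hn.ne'], List.IsChain.take hA n, ?_,
    fun a ha => hnonneg a (List.mem_of_mem_take ha)⟩
  rw [List.getD_eq_getElem?_getD, List.getElem?_take_of_lt hn, ← List.getD_eq_getElem?_getD,
    h0]

theorem eraseIdx (hC : OrdDyck C) {j : ℕ} (hel : Eligible C j) :
    OrdDyck (C.eraseIdx j) := by
  obtain ⟨hlt, hone, hdesc⟩ := hel
  have hj0 : 0 < j := by
    by_contra h
    simp [show j = 0 by omega] at hone
  obtain ⟨hne, hA, h0, hnonneg⟩ := hC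
  refine ⟨?_, hA.eraseIdx hdesc, ?_, fun a ha => hnonneg a ((List.eraseIdx_sublist C j).mem ha)⟩
  · rw [← List.length_pos_iff, List.length_eraseIdx_of_lt hlt]
    omega
  · rw [List.getD_eq_getElem?_getD, List.getElem?_eraseIdx_of_lt hj0,
      ← List.getD_eq_getElem?_getD, h0]

theorem exists_eligible_lt (hC : OrdDyck C) {t q : ℕ} (htq : t < q)
    (hq : q < C.length) (hle : C.getD q 0 ≤ C.getD t 0)
    (hfirst : ∀ s < t, C.getD s 0 ≠ C.getD t 0)
    (hone : #{i ∈ range t | C.getD i 0 = C.getD t 0 - 1} = 1) :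
    ∃ t' < q, Eligible C t' := by
  by_cases hdesc : C.getD (t + 1) 0 ≤ C.getD t 0
  · exact ⟨t, htq, by omega, hone, Or.inr hdesc⟩
  have hup : C.getD (t + 1) 0 = C.getD t 0 + 1 := by
    have := hC.2.1.getD_succ_le (i := t) (by omega)
    omega
  have htq' : t + 1 < q := by
    by_contra h
    rw [show q = t + 1 by omega] at hle
    omega
  -- an earlier occurrence of `C t + 1` would force an earlier occurrence of `C t`
  have hfirst' : ∀ s < t + 1, C.getD s 0 ≠ C.getD (t + 1) 0 := by
    intro s hs hs_eq
    obtain rfl | hst := Nat.lt_succ_iff_lt_or_eq.mp hs |>.symm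
    · omega
    obtain ⟨r, hr, hr_eq⟩ := hC.exists_getD_eq (s := s) (by omega) (hC.getD_nonneg t) (by omega)
    exact hfirst r (by omega) hr_eq
  have hone' : #{i ∈ range (t + 1) | C.getD i 0 = C.getD (t + 1) 0 - 1} = 1 := by
    rw [card_eq_one]
    refine ⟨t, ?_⟩
    ext i
    simp only [mem_filter, mem_range, mem_singleton, hup, add_sub_cancel_right]
    refine ⟨fun ⟨hi, h⟩ => ?_, fun h => ⟨by omega, h ▸ rfl⟩⟩
    by_contra hne
    exact hfirst i (by omega) h
  exact hC.exists_eligible_lt htq' hq (by omega) hfirst' hone'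
termination_by q - t

theorem getD_lt_of_eligNF? (hC : OrdDyck C) {j : ℕ} (h : eligNF? C = some j) {i : ℕ}
    (hij : i < j) : C.getD i 0 < C.getD j 0 := by
  obtain ⟨⟨hel, -⟩, hmin⟩ := eligNF?_eq_some_iff.mp h
  have hj : j < C.length := hel.1
  set v := C.getD j 0
  by_contra! hvi
  have hex : ∃ r, r < j ∧ C.getD r 0 = v := by
    obtain ⟨r, hr, hrv⟩ := hC.exists_getD_eq (s := i) (by omega) (hC.getD_nonneg j) hvi
    exact ⟨r, by omega, hrv⟩
  classical
  obtain ⟨hi0j, hi0v⟩ := Nat.find_spec hex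
  set i0 := Nat.find hex
  have hfirst : ∀ s < i0, C.getD s 0 ≠ C.getD i0 0 := fun s hs hs_eq =>
    Nat.find_min hex hs ⟨by omega, hs_eq.trans hi0v⟩
  have hsub :
      {i ∈ range i0 | C.getD i 0 = C.getD i0 0 - 1} ⊆ {i ∈ range j | C.getD i 0 = v - 1} := by
    intro s
    simp only [mem_filter, mem_range, hi0v]
    exact fun ⟨hs, h⟩ => ⟨by omega, h⟩
  have hne : {i ∈ range i0 | C.getD i 0 = C.getD i0 0 - 1}.Nonempty := by
    have hv : 1 ≤ v := by
      obtain ⟨a, ha⟩ := card_pos.mp (hel.2.1 ▸ Nat.one_pos)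
      have := (mem_filter.mp ha).2
      have := hC.getD_nonneg a
      omega
    obtain ⟨r, hr, hrv⟩ := hC.exists_getD_eq (s := i0) (by omega) (by omega : 0 ≤ v - 1)
      (by omega)
    refine ⟨r, mem_filter.mpr ⟨mem_range.mpr (lt_of_le_of_ne hr ?_), by rw [hi0v]; exact hrv⟩⟩
    rintro rfl
    omega
  obtain ⟨t', ht'j, ht'el⟩ := hC.exists_eligible_lt hi0j hj hi0v.ge hfirst
    (le_antisymm (hel.2.1 ▸ card_le_card hsub) (card_pos.mpr hne))
  exact hmin t' ht'j ⟨ht'el, by omega⟩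

end OrdDyck

theorem di_eq_pairCount (x : List ℤ) : di x = x.pairCount (fun a b => a = b + 1) :=
  card_filter_getD_lt_getD_eq_pairCount (fun a b : ℤ => a = b + 1) x 0

theorem nv_eq_pairCount (x : List ℤ) : nv x = x.pairCount (· = ·) :=
  card_filter_getD_lt_getD_eq_pairCount (fun a b : ℤ => a = b) x 0

theorem List.Perm.nv_eq {x y : List ℤ} (h : x.Perm y) : nv x = nv y := by
  rw [nv_eq_pairCount, nv_eq_pairCount, h.pairCount_eq]

theorem di_extract_step {C : List ℤ} (hC : OrdDyck C) {j : ℕ} (h : eligNF? C = some j)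
    (E G : List ℤ) :
    di (E ++ [C.getD j 0] ++ C.eraseIdx j ++ G) = di (E ++ C ++ G) + 1 := by
  obtain ⟨⟨hel, -⟩, -⟩ := eligNF?_eq_some_iff.mp h
  have hj : j < C.length := hel.1
  set v := C.getD j 0
  have hpred : (C.take j).countP (fun b => v = b + 1) = 1 := by
    rw [← card_filter_range_getD_eq_countP _ C 0 hj.le, ← hel.2.1]
    congr 1
    exact filter_congr fun i _ => by omega
  have hsucc : (C.take j).countP (fun b => b = v + 1) = 0 := by
    rw [← card_filter_range_getD_eq_countP _ C 0 hj.le, card_eq_zero, filter_eq_empty_iff]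
    intro i hi
    have := hC.getD_lt_of_eligNF? h (mem_range.mp hi)
    omega
  have hsplit : C = C.take j ++ v :: C.drop (j + 1) := by
    rw [show v = C[j] from List.getD_eq_getElem _ _ hj, List.getElem_cons_drop,
      List.take_append_drop]
  have hmove := List.pairCount_append_cons_append (fun a b => a = b + 1) E (C.take j)
    (C.drop (j + 1) ++ G) v
  rw [hsucc, hpred] at hmove
  rw [di_eq_pairCount, di_eq_pairCount, List.eraseIdx_eq_take_drop_succ]
  conv_rhs => rw [hsplit]
  simpa only [List.append_assoc, List.cons_append, List.nil_append, add_zero] using hmove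

theorem extractAux_perm (fuel : ℕ) (E C : List ℤ) :
    ((extractAux fuel E C).1 ++ (extractAux fuel E C).2).Perm (E ++ C) := by
  induction fuel generalizing E C with
  | zero => rfl
  | succ fuel ih =>
    rcases hj : eligNF? C with _ | j
    · simp only [extractAux, hj]
      rfl
    · simp only [extractAux, hj]
      have hlt : j < C.length := (eligNF?_eq_some_iff.mp hj).1.1.1
      refine (ih _ _).trans ?_
      rw [List.append_assoc, List.singleton_append, List.getD_eq_getElem _ _ hlt]
      exact (List.getElem_cons_eraseIdx_perm hlt).append_left E

theorem di_extractAux (fuel : ℕ) {C : List ℤ} (hC : OrdDyck C) (E G : List ℤ) :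
    di ((extractAux fuel E C).1 ++ (extractAux fuel E C).2 ++ G) + E.length =
      di (E ++ C ++ G) + (extractAux fuel E C).1.length := by
  induction fuel generalizing E C with
  | zero => rfl
  | succ fuel ih =>
    rcases hj : eligNF? C with _ | j
    · simp only [extractAux, hj]
    · simp only [extractAux, hj]
      have hel := (eligNF?_eq_some_iff.mp hj).1.1
      have := ih (hC.eraseIdx hel) (E ++ [C.getD j 0])
      rw [di_extract_step hC hj, List.length_append, List.length_singleton] at this
      omega

theorem phi1_perm (D : List ℤ) :
    ((phi1 D).1 ++ (phi1 D).2.1 ++ (phi1 D).2.2).Perm D := by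
  have key (n fuel : ℕ) :
      ((extractAux fuel [] (D.take n)).1 ++ (extractAux fuel [] (D.take n)).2 ++
        D.drop n).Perm D := by
    simpa only [List.nil_append, List.take_append_drop] using
      (extractAux_perm fuel [] (D.take n)).append_right (D.drop n)
  exact key _ _

theorem di_phi1 {D : List ℤ} (hD : OrdDyck D) :
    di ((phi1 D).1 ++ (phi1 D).2.1 ++ (phi1 D).2.2) = di D + (phi1 D).1.length := by
  have key (k fuel : ℕ) :
      di ((extractAux fuel [] (D.take (k + 1))).1 ++ (extractAux fuel [] (D.take (k + 1))).2 ++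
        D.drop (k + 1)) = di D + (extractAux fuel [] (D.take (k + 1))).1.length := by
    simpa only [List.nil_append, List.take_append_drop, List.length_nil, add_zero] using
      di_extractAux fuel (hD.take k.succ_pos) [] (D.drop (k + 1))
  exact key _ _

/-- **Statistics preserved by `φ₁`.**  If `D` is an ordinary Dyck sequence and
`φ₁(D) = (E, F, G)`, then `area(E ⧺ F ⧺ G) = area(D)` and
`dinv(E ⧺ F ⧺ G) − len(E) = dinv(D)`. -/
theorem phi1_statistics (D : List ℤ) (hD : OrdDyck D) :
    area ((phi1 D).1 ++ (phi1 D).2.1 ++ (phi1 D).2.2) = area D ∧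
    dinv ((phi1 D).1 ++ (phi1 D).2.1 ++ (phi1 D).2.2) = dinv D + (phi1 D).1.length := by
  refine ⟨(phi1_perm D).sum_eq, ?_⟩
  rw [dinv, dinv, di_phi1 hD, (phi1_perm D).nv_eq]
  omega
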